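/- Let G = (V,E) be a finite simple graph and v ∈ V with neighborhood N(v). Then Q(G,x) = x·Q(G−v,x) + Σ_{∅ ≠ W ⊆ N(v)} (−1)^{|W|+1} · Q_{W∪{v}}(G,x), where for a vertex subset U ⊆ V the polynomial Q_U(G,x) = Σ x^{|π|} is taken over all connected set partitions π of G that possess a block containing U (this polynomial equals Q(G/U,x), the partition polynomial of the graph obtained from G by merging all vertices of U into a single vertex). -/

import Mathlib

open Finset

variable {V : Type*} [Fintype V] [DecidableEq V]

/-- `P` is a set partition of the vertex set `V`, given as a finset of (nonempty,
pairwise disjoint, covering) blocks. -/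
def IsPartition (P : Finset (Finset V)) : Prop :=
  ∅ ∉ P ∧ ∀ v : V, ∃! B : Finset V, B ∈ P ∧ v ∈ B

/-- `P` is a connected set partition of `G`: every block induces a connected subgraph. -/
def IsConnPartition (G : SimpleGraph V) (P : Finset (Finset V)) : Prop :=
  IsPartition P ∧ ∀ B ∈ P, (G.induce (B : Set V)).Connected

open scoped Classical in
/-- The finset of all connected set partitions (`Π_c(G)`). -/
noncomputable def connParts (G : SimpleGraph V) : Finset (Finset (Finset V)) :=
  Finset.univ.filter (IsConnPartition G)

open scoped Classical in
/-- The partition polynomial `Q(G,x) = Σ_{π ∈ Π_c(G)} x^{|π|}`, evaluated at `x : ℤ`. -/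
noncomputable def Q (G : SimpleGraph V) (x : ℤ) : ℤ :=
  ∑ P ∈ connParts G, x ^ P.card

/-!
Group the connected partitions `π` of `G` by the block `B` of `π` containing `v`. In the
alternating sum, `π` is counted once for every nonempty `W ⊆ B ∩ N(v)`, so its total weight is
`1` if `B ∩ N(v)` is nonempty and `0` otherwise. Since `B` induces a connected subgraph,
`B ∩ N(v) = ∅` exactly when `B = {v}`, and the connected partitions having `{v}` as a block are
the connected partitions of `G - v` with the block `{v}` added, which accounts for `x·Q(G-v,x)`.
-/

open SimpleGraph

variable {α β : Type*}

lemma mem_connParts [Fintype α] {G : SimpleGraph α} {P : Finset (Finset α)} :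
    P ∈ connParts G ↔ IsConnPartition G P := by
  classical
  simp [connParts]

lemma IsPartition.eq_of_mem_of_mem {P : Finset (Finset α)} (hP : IsPartition P)
    {B B' : Finset α} (hB : B ∈ P) (hB' : B' ∈ P) {a : α} (ha : a ∈ B) (ha' : a ∈ B') :
    B = B' :=
  (hP.2 a).unique ⟨hB, ha⟩ ⟨hB', ha'⟩

lemma existsUnique_mem_insert_iff [DecidableEq α] {s : Finset α} {a : α} {p : α → Prop}
    (ha : ¬ p a) : (∃! b, b ∈ insert a s ∧ p b) ↔ ∃! b, b ∈ s ∧ p b :=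
  existsUnique_congr fun b => by
    rw [mem_insert]
    exact ⟨fun ⟨hb, hp⟩ => ⟨hb.resolve_left (by rintro rfl; exact ha hp), hp⟩,
      fun ⟨hb, hp⟩ => ⟨Or.inr hb, hp⟩⟩

lemma existsUnique_mem_map_iff {s : Finset α} {f : α ↪ β} {p : β → Prop} :
    (∃! b, b ∈ s.map f ∧ p b) ↔ ∃! a, a ∈ s ∧ p (f a) := by
  constructor
  · rintro ⟨_, ⟨hb, hp⟩, huniq⟩
    obtain ⟨a, ha, rfl⟩ := mem_map.1 hb
    exact ⟨a, ⟨ha, hp⟩, fun a' ⟨ha', hp'⟩ =>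
      f.injective (huniq _ ⟨mem_map_of_mem f ha', hp'⟩)⟩
  · rintro ⟨a, ⟨ha, hp⟩, huniq⟩
    refine ⟨f a, ⟨mem_map_of_mem f ha, hp⟩, ?_⟩
    rintro _ ⟨hb, hp'⟩
    obtain ⟨a', ha', rfl⟩ := mem_map.1 hb
    rw [huniq a' ⟨ha', hp'⟩]

lemma existsUnique_mem_map_mapEmbedding_iff (f : α ↪ β) (P : Finset (Finset α)) (a : α) :
    (∃! B, B ∈ P.map (mapEmbedding f).toEmbedding ∧ f a ∈ B)
      ↔ ∃! C, C ∈ P ∧ a ∈ C := by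
  simp only [existsUnique_mem_map_iff, RelEmbedding.coe_toEmbedding, mapEmbedding_apply, mem_map']

lemma sum_nonempty_subsets_neg_one_pow [DecidableEq α] (S T : Finset α) :
    ∑ W ∈ S.powerset with W.Nonempty, (if W ⊆ T then (-1 : ℤ) ^ (#W + 1) else 0)
      = if (S ∩ T).Nonempty then 1 else 0 := by
  have hsubsets :
      {W ∈ {W ∈ S.powerset | W.Nonempty} | W ⊆ T} = (S ∩ T).powerset.erase ∅ := by
    ext W
    simp only [mem_filter, mem_powerset, mem_erase, subset_inter_iff, nonempty_iff_ne_empty]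
    tauto
  rw [← sum_filter, hsubsets, sum_erase_eq_sub (empty_mem_powerset _)]
  simp only [pow_succ, mul_neg_one, sum_neg_distrib, sum_powerset_neg_one_pow_card]
  by_cases h : (S ∩ T).Nonempty <;> simp [h, ← not_nonempty_iff_eq_empty]

lemma eq_singleton_of_connected_induce {G : SimpleGraph α} {B : Finset α} {v : α}
    (hB : (G.induce (B : Set α)).Connected) (hv : v ∈ B) (hadj : ∀ w ∈ B, ¬ G.Adj v w) :
    B = {v} := by
  by_contra hne
  have : Nontrivial (B : Set α) :=
    (Finset.nontrivial_coe.2 ((Finset.nontrivial_iff_ne_singleton hv).2 hne)).coe_sort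
  obtain ⟨w, hw⟩ := hB.preconnected.exists_adj_of_nontrivial ⟨v, hv⟩
  exact hadj w w.2 hw

lemma IsPartition.exists_insert_subset_iff [DecidableEq α] {P : Finset (Finset α)}
    (hP : IsPartition P) {B₀ : Finset α} {v : α} (hB₀ : B₀ ∈ P) (hv : v ∈ B₀)
    (W : Finset α) :
    (∃ B ∈ P, insert v W ⊆ B) ↔ W ⊆ B₀ :=
  ⟨fun ⟨_, hB, hsub⟩ => hP.eq_of_mem_of_mem hB hB₀ (hsub (mem_insert_self v W)) hv ▸
      (subset_insert v W).trans hsub,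
    fun h => ⟨B₀, hB₀, insert_subset hv h⟩⟩

lemma IsConnPartition.singleton_mem_iff [DecidableEq α] {G : SimpleGraph α}
    {P : Finset (Finset α)} (hP : IsConnPartition G P) {B₀ : Finset α} {v : α}
    (hB₀ : B₀ ∈ P) (hv : v ∈ B₀) [Fintype (G.neighborSet v)] :
    {v} ∈ P ↔ ¬ (G.neighborFinset v ∩ B₀).Nonempty := by
  constructor
  · rintro hsingle ⟨w, hw⟩
    rw [← hP.1.eq_of_mem_of_mem hsingle hB₀ (mem_singleton_self v) hv, mem_inter,
      mem_singleton] at hw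
    exact G.irrefl (hw.2 ▸ (G.mem_neighborFinset v w).1 hw.1)
  · intro hdisj
    rwa [← eq_singleton_of_connected_induce (hP.2 B₀ hB₀) hv
      fun w hw hadj => hdisj ⟨w, mem_inter.2 ⟨(G.mem_neighborFinset v w).2 hadj, hw⟩⟩]

lemma IsConnPartition.sum_neg_one_pow_of_exists_insert_subset [DecidableEq α]
    {G : SimpleGraph α} {P : Finset (Finset α)} (hP : IsConnPartition G P) (v : α)
    [Fintype (G.neighborSet v)] :
    ∑ W ∈ (G.neighborFinset v).powerset with W.Nonempty,
        (if ∃ B ∈ P, insert v W ⊆ B then (-1 : ℤ) ^ (#W + 1) else 0)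
      = if {v} ∈ P then 0 else 1 := by
  obtain ⟨B₀, ⟨hB₀, hv⟩, -⟩ := hP.1.2 v
  simp only [hP.1.exists_insert_subset_iff hB₀ hv, sum_nonempty_subsets_neg_one_pow,
    hP.singleton_mem_iff hB₀ hv, ite_not]

noncomputable def SimpleGraph.induceInduceIso (G : SimpleGraph α) (s : Set α) (t : Set s) :
    (G.induce s).induce t ≃g G.induce (Subtype.val '' t) where
  toEquiv := Equiv.Set.image Subtype.val t Subtype.val_injective
  map_rel_iff' := by
    rintro ⟨⟨a, ha⟩, hat⟩ ⟨⟨b, hb⟩, hbt⟩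
    simp [Equiv.Set.image, Equiv.Set.imageOfInjOn, SimpleGraph.comap]

lemma connected_induce_map_subtype_iff {G : SimpleGraph α} {s : Set α} (C : Finset s) :
    (G.induce (C.map (Function.Embedding.subtype _) : Set α)).Connected
      ↔ ((G.induce s).induce (C : Set s)).Connected := by
  rw [coe_map]
  exact (G.induceInduceIso s C).connected_iff.symm

section DeleteVertex

variable {v : α}

lemma singleton_notMem_map_subtype (P : Finset (Finset {w : α | w ≠ v})) :
    {v} ∉ P.map (mapEmbedding (Function.Embedding.subtype _)).toEmbedding := by
  intro h
  obtain ⟨C, -, hC⟩ := mem_map.1 h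
  exact notMem_map_subtype_of_not_property C (not_not.2 rfl)
    (mapEmbedding_apply (f := Function.Embedding.subtype _) ▸ hC ▸ mem_singleton_self v)

variable [DecidableEq α]

variable (v) in
def insertSingletonBlock (P : Finset (Finset {w : α | w ≠ v})) : Finset (Finset α) :=
  insert {v} (P.map (mapEmbedding (Function.Embedding.subtype _)).toEmbedding)

lemma card_insertSingletonBlock (P : Finset (Finset {w : α | w ≠ v})) :
    #(insertSingletonBlock v P) = #P + 1 := by
  rw [insertSingletonBlock, card_insert_of_notMem (singleton_notMem_map_subtype P), card_map]

lemma insertSingletonBlock_injective : Function.Injective (insertSingletonBlock (α := α) v) := by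
  intro P P' h
  have := congrArg (·.erase {v}) h
  simp only [insertSingletonBlock, erase_insert (singleton_notMem_map_subtype _)] at this
  exact map_injective _ this

lemma isPartition_insertSingletonBlock_iff {P : Finset (Finset {w : α | w ≠ v})} :
    IsPartition (insertSingletonBlock v P) ↔ IsPartition P := by
  unfold IsPartition insertSingletonBlock
  refine and_congr (by simp) ⟨fun h w => ?_, fun h w => ?_⟩
  · exact (existsUnique_mem_map_mapEmbedding_iff _ P w).1
      ((existsUnique_mem_insert_iff (p := (w.1 ∈ ·)) fun h => w.2 (mem_singleton.1 h)).1 (h w))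
  · by_cases hw : w = v
    · subst hw
      refine ⟨{w}, ⟨mem_insert_self _ _, mem_singleton_self w⟩, fun B ⟨hB, hwB⟩ => ?_⟩
      rcases mem_insert.1 hB with rfl | hB
      · rfl
      · obtain ⟨C, -, rfl⟩ := mem_map.1 hB
        exact absurd hwB (notMem_map_subtype_of_not_property C (not_not.2 rfl))
    · exact (existsUnique_mem_insert_iff (p := (w ∈ ·)) fun h => hw (mem_singleton.1 h)).2
        ((existsUnique_mem_map_mapEmbedding_iff _ P ⟨w, hw⟩).2 (h ⟨w, hw⟩))

lemma isConnPartition_insertSingletonBlock_iff {G : SimpleGraph α}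
    {P : Finset (Finset {w : α | w ≠ v})} :
    IsConnPartition G (insertSingletonBlock v P)
      ↔ IsConnPartition (G.induce {w | w ≠ v}) P := by
  refine and_congr isPartition_insertSingletonBlock_iff ?_
  have hsingleton : (G.induce (({v} : Finset α) : Set α)).Connected := by
    rw [coe_singleton, induce_singleton_eq_top]
    exact .of_subsingleton
  simp only [insertSingletonBlock, forall_mem_insert, forall_mem_map, RelEmbedding.coe_toEmbedding,
    mapEmbedding_apply, connected_induce_map_subtype_iff, hsingleton, true_and]

lemma IsPartition.exists_insertSingletonBlock_eq {P : Finset (Finset α)} (hP : IsPartition P)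
    (hv : {v} ∈ P) : ∃ P', insertSingletonBlock v P' = P := by
  have hne : ∀ B ∈ P.erase {v}, ∀ w ∈ B, w ∈ {w : α | w ≠ v} := fun B hB w hw hwv =>
    (mem_erase.1 hB).1 <|
      hP.eq_of_mem_of_mem (mem_erase.1 hB).2 hv (hwv ▸ hw) (mem_singleton_self v)
  refine ⟨(P.erase {v}).image (Finset.subtype (· ∈ {w : α | w ≠ v})), ?_⟩
  rw [insertSingletonBlock, map_eq_image, image_image, image_congr (g := id), image_id,
    insert_erase hv]
  exact fun B hB => subtype_map_of_mem (hne B hB)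

lemma sum_connParts_filter_singleton_mem [Fintype α] (G : SimpleGraph α) (v : α) (x : ℤ) :
    ∑ P ∈ connParts G with {v} ∈ P, x ^ #P = x * Q (G.induce {w | w ≠ v}) x := by
  rw [Q, mul_sum]
  symm
  refine sum_bij (fun P' _ => insertSingletonBlock v P') (fun P' hP' => ?_)
    (fun _ _ _ _ h => insertSingletonBlock_injective h) (fun P hP => ?_) (fun P' _ => ?_)
  · rw [mem_filter, mem_connParts, isConnPartition_insertSingletonBlock_iff]
    exact ⟨mem_connParts.1 hP', mem_insert_self _ _⟩
  · rw [mem_filter, mem_connParts] at hP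
    obtain ⟨P', rfl⟩ := hP.1.1.exists_insertSingletonBlock_eq hP.2
    exact ⟨P', mem_connParts.2 (isConnPartition_insertSingletonBlock_iff.1 hP.1), rfl⟩
  · rw [card_insertSingletonBlock, pow_succ, mul_comm]

end DeleteVertex

open scoped Classical in
/-- Inclusion–exclusion on the neighborhood of `v`:
`Q(G,x) = x·Q(G-v,x) + Σ_{∅≠W⊆N(v)} (-1)^{|W|+1} Q_{W∪{v}}(G,x)`, where
`Q_U(G,x)` sums `x^{|π|}` over connected set partitions of `G` with a block containing `U`. -/
theorem neighborhood_inclusion_exclusion (G : SimpleGraph V) [DecidableRel G.Adj]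
    (v : V) (x : ℤ) :
    Q G x
      = x * Q (G.induce {w : V | w ≠ v}) x
        + ∑ W ∈ (G.neighborFinset v).powerset.filter (fun W => W.Nonempty),
            (-1 : ℤ) ^ (W.card + 1) *
              ∑ P ∈ (connParts G).filter (fun P => ∃ B ∈ P, insert v W ⊆ B),
                x ^ P.card := by
  have halternating : ∑ W ∈ (G.neighborFinset v).powerset with W.Nonempty,
      (-1 : ℤ) ^ (#W + 1) * ∑ P ∈ connParts G with ∃ B ∈ P, insert v W ⊆ B, x ^ #P
        = ∑ P ∈ connParts G with {v} ∉ P, x ^ #P := by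
    simp_rw [sum_filter (s := connParts G), mul_sum]
    rw [sum_comm]
    refine sum_congr rfl fun P hP => ?_
    simp_rw [mul_ite, mul_zero, ← ite_zero_mul, ← sum_mul,
      (mem_connParts.1 hP).sum_neg_one_pow_of_exists_insert_subset v, ite_mul, zero_mul, one_mul,
      ite_not]
  rw [halternating, ← sum_connParts_filter_singleton_mem, sum_filter_add_sum_filter_not, Q]
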